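/- Let u₀ : ℝ³ → ℝ³ be measurable with ‖u₀‖_{L^{3,∞}} < ∞. Then for every q > 3 there is a constant C = C(q) such that for all R > 0, A_{0,q}(R) := (∑_{k∈ℤ³} (∫_{B_R(Rk)} |u₀(x)|² dx)^{q/2})^{2/q} ≤ C R ‖u₀‖²_{L^{3,∞}}. -/

import Mathlib

open MeasureTheory Filter Metric Set
open scoped ENNReal NNReal Topology Real BigOperators

noncomputable section

abbrev E3 : Type := EuclideanSpace ℝ (Fin 3)

/-- A lattice point of `ℤ³` viewed as a point of `ℝ³`. -/
def zc (k : Fin 3 → ℤ) : E3 := WithLp.toLp 2 (fun i => (k i : ℝ))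

/-- The `E²_q` (Wiener amalgam) norm. -/
def e2qNorm (q : ℝ) (f : E3 → E3) : ℝ≥0∞ :=
  (∑' k : Fin 3 → ℤ, (∫⁻ x in ball (zc k) 1, (‖f x‖₊ : ℝ≥0∞) ^ 2) ^ (q/2)) ^ (1/q)

/-- `A_{0,q}(R) = ‖(∫_{B_R(Rk)} |u₀|²)_k‖_{ℓ^{q/2}}`. -/
def A0q (q R : ℝ) (u₀ : E3 → E3) : ℝ≥0∞ :=
  (∑' k : Fin 3 → ℤ, (∫⁻ x in ball (R • zc k) R, (‖u₀ x‖₊ : ℝ≥0∞) ^ 2) ^ (q/2)) ^ (2/q)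

/-- `N⁰_R(u₀) = sup_{x₀} R⁻¹ ∫_{B_R(x₀)} |u₀|²`. -/
def N0R (u₀ : E3 → E3) (R : ℝ) : ℝ≥0∞ :=
  ⨆ x₀ : E3, (ENNReal.ofReal R)⁻¹ * ∫⁻ x in ball x₀ R, (‖u₀ x‖₊ : ℝ≥0∞) ^ 2

/-- `N⁰_{q,R}(u₀) = R⁻¹ A_{0,q}(R)`. -/
def N0q (q R : ℝ) (u₀ : E3 → E3) : ℝ≥0∞ := (ENNReal.ofReal R)⁻¹ * A0q q R u₀

/-- The weak-`L³` (Lorentz `L^{3,∞}`) quasinorm `sup_{σ>0} σ |{|f|>σ}|^{1/3}`. -/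
def wL3 (f : E3 → E3) : ℝ≥0∞ :=
  ⨆ σ : ℝ≥0, (σ : ℝ≥0∞) * (volume {x : E3 | (σ : ℝ) < ‖f x‖}) ^ ((1:ℝ)/3)



open Classical in
lemma geom_upper {r : ℝ} (hr : 0 < r) {A : ℝ≥0∞} (hA : A ≠ ⊤) :
    ∑' j : ℤ, (if (2:ℝ≥0∞)^j < A then ((2:ℝ≥0∞)^j) ^ r else 0)
      ≤ (1 - (2:ℝ≥0∞) ^ (-r))⁻¹ * A ^ r := by
  rcases eq_or_ne A 0 with rfl | hA0
  · simp
  have ha : 0 < A.toReal := ENNReal.toReal_pos hA0 hA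
  set L := Real.logb 2 A.toReal with hL
  set j₁ : ℤ := ⌊L⌋ with hj₁
  have h2t : ∀ j : ℤ, ((2:ℝ≥0∞)^j) = (((2:ℝ≥0)^j : ℝ≥0) : ℝ≥0∞) := by
    intro j; rw [ENNReal.coe_zpow (by norm_num)]; norm_num
  have hfin : ∀ j : ℤ, ((2:ℝ≥0∞)^j) ≠ ⊤ := fun j => by rw [h2t]; exact ENNReal.coe_ne_top
  have htoReal : ∀ j : ℤ, ((2:ℝ≥0∞)^j).toReal = (2:ℝ)^j := by
    intro j; rw [h2t, ENNReal.coe_toReal, NNReal.coe_zpow]; norm_num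
  -- support condition
  have hsupp : ∀ j : ℤ, (2:ℝ≥0∞)^j < A → j ≤ j₁ := by
    intro j hj
    have : (2:ℝ)^j < A.toReal := by
      have := (ENNReal.toReal_lt_toReal (hfin j) hA).2 hj
      rwa [htoReal] at this
    have hlt : (j:ℝ) < L := by
      rw [hL, Real.lt_logb_iff_rpow_lt one_lt_two ha, Real.rpow_intCast]
      exact this
    exact Int.le_floor.2 hlt.le
  have hle : ((2:ℝ≥0∞)^j₁) ≤ A := by
    rw [← ENNReal.ofReal_toReal (hfin j₁), ← ENNReal.ofReal_toReal hA]
    apply ENNReal.ofReal_le_ofReal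
    rw [htoReal]
    calc (2:ℝ)^j₁ = (2:ℝ)^((j₁:ℝ)) := by rw [Real.rpow_intCast]
      _ ≤ (2:ℝ)^L := Real.rpow_le_rpow_of_exponent_le one_le_two (Int.floor_le L)
      _ = A.toReal := Real.rpow_logb two_pos (by norm_num) ha
  set f : ℤ → ℝ≥0∞ := fun j => if (2:ℝ≥0∞)^j < A then ((2:ℝ≥0∞)^j) ^ r else 0 with hf
  have hinj : Function.Injective (fun i : ℕ => j₁ - (i:ℤ)) := by
    intro a b h; simpa using h
  have hrange : Function.support f ⊆ Set.range (fun i : ℕ => j₁ - (i:ℤ)) := by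
    intro j hj
    have hjle : j ≤ j₁ := by
      by_contra hcon
      apply hj
      rw [hf]
      simp only
      rw [if_neg]
      intro h2
      exact hcon (hsupp j h2)
    exact ⟨(j₁ - j).toNat, by simp [Int.toNat_of_nonneg (by omega : (0:ℤ) ≤ j₁ - j)]⟩
  calc ∑' j : ℤ, f j = ∑' i : ℕ, f (j₁ - (i:ℤ)) := (hinj.tsum_eq hrange).symm
    _ ≤ ∑' i : ℕ, ((2:ℝ≥0∞)^(j₁ - (i:ℤ))) ^ r := by
        apply ENNReal.tsum_le_tsum; intro i
        rw [hf]; simp only; split_ifs with h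
        · exact le_rfl
        · exact zero_le
    _ = ∑' i : ℕ, ((2:ℝ≥0∞)^j₁) ^ r * ((2:ℝ≥0∞) ^ (-r)) ^ i := by
        apply tsum_congr; intro i
        rw [← ENNReal.rpow_intCast 2 (j₁ - (i:ℤ)), ← ENNReal.rpow_intCast 2 j₁,
          ← ENNReal.rpow_natCast ((2:ℝ≥0∞)^(-r)) i, ← ENNReal.rpow_mul,
          ← ENNReal.rpow_mul, ← ENNReal.rpow_mul,
          ← ENNReal.rpow_add _ _ (by norm_num) (by norm_num)]
        congr 1
        push_cast
        ring
    _ = ((2:ℝ≥0∞)^j₁) ^ r * (1 - (2:ℝ≥0∞) ^ (-r))⁻¹ := by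
        rw [ENNReal.tsum_mul_left, ENNReal.tsum_geometric]
    _ ≤ A ^ r * (1 - (2:ℝ≥0∞) ^ (-r))⁻¹ := by
        gcongr
    _ = (1 - (2:ℝ≥0∞) ^ (-r))⁻¹ * A ^ r := mul_comm _ _

open Classical in
lemma geom_lower {r : ℝ} (hr : 0 < r) {A : ℝ≥0∞} (hA : A ≠ ⊤) :
    A ^ r ≤ (2:ℝ≥0∞) ^ r * ∑' j : ℤ, (if (2:ℝ≥0∞)^j < A then ((2:ℝ≥0∞)^j) ^ r else 0) := by
  rcases eq_or_ne A 0 with rfl | hA0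
  · simp [ENNReal.zero_rpow_of_pos hr]
  have ha : 0 < A.toReal := ENNReal.toReal_pos hA0 hA
  set L := Real.logb 2 A.toReal with hL
  set j₀ : ℤ := ⌈L⌉ - 1 with hj₀
  have h2t : ∀ j : ℤ, ((2:ℝ≥0∞)^j) = (((2:ℝ≥0)^j : ℝ≥0) : ℝ≥0∞) := by
    intro j; rw [ENNReal.coe_zpow (by norm_num)]; norm_num
  have hfin : ∀ j : ℤ, ((2:ℝ≥0∞)^j) ≠ ⊤ := fun j => by rw [h2t]; exact ENNReal.coe_ne_top
  have htoReal : ∀ j : ℤ, ((2:ℝ≥0∞)^j).toReal = (2:ℝ)^j := by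
    intro j; rw [h2t, ENNReal.coe_toReal, NNReal.coe_zpow]; norm_num
  have hlt : (2:ℝ≥0∞)^j₀ < A := by
    rw [← ENNReal.ofReal_toReal (hfin j₀), ← ENNReal.ofReal_toReal hA]
    apply ENNReal.ofReal_lt_ofReal_iff ha |>.2
    rw [htoReal]
    calc (2:ℝ)^j₀ = (2:ℝ)^((j₀:ℝ)) := by rw [Real.rpow_intCast]
      _ < (2:ℝ)^L := by
          apply Real.rpow_lt_rpow_of_exponent_lt one_lt_two
          rw [hj₀]; push_cast
          have := Int.ceil_lt_add_one L
          linarith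
      _ = A.toReal := Real.rpow_logb two_pos (by norm_num) ha
  have hub : A ≤ (2:ℝ≥0∞)^(j₀ + 1) := by
    rw [← ENNReal.ofReal_toReal (hfin (j₀+1)), ← ENNReal.ofReal_toReal hA]
    apply ENNReal.ofReal_le_ofReal
    rw [htoReal]
    calc A.toReal = (2:ℝ)^L := (Real.rpow_logb two_pos (by norm_num) ha).symm
      _ ≤ (2:ℝ)^((j₀ + 1 : ℤ):ℝ) := by
          apply Real.rpow_le_rpow_of_exponent_le one_le_two
          rw [hj₀]; push_cast
          have := Int.le_ceil L
          linarith
      _ = (2:ℝ)^(j₀+1) := by rw [Real.rpow_intCast]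
  calc A ^ r ≤ ((2:ℝ≥0∞)^(j₀+1)) ^ r := ENNReal.rpow_le_rpow hub hr.le
    _ = (2:ℝ≥0∞) ^ r * ((2:ℝ≥0∞)^j₀) ^ r := by
        rw [ENNReal.zpow_add (by norm_num) (by norm_num) j₀ 1, zpow_one,
          mul_comm ((2:ℝ≥0∞)^j₀) 2,
          ENNReal.mul_rpow_of_ne_top (by norm_num) (hfin j₀)]
    _ ≤ (2:ℝ≥0∞) ^ r * ∑' j : ℤ, (if (2:ℝ≥0∞)^j < A then ((2:ℝ≥0∞)^j) ^ r else 0) := by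
        gcongr
        have : ((2:ℝ≥0∞)^j₀) ^ r = (if (2:ℝ≥0∞)^j₀ < A then ((2:ℝ≥0∞)^j₀) ^ r else 0) := by
          rw [if_pos hlt]
        rw [this]
        exact ENNReal.le_tsum j₀


lemma coord_le_norm (v : E3) (i : Fin 3) : |v i| ≤ ‖v‖ := by
  rw [EuclideanSpace.norm_eq, ← Real.sqrt_sq_eq_abs]
  apply Real.sqrt_le_sqrt
  have : v i ^ 2 = ‖v i‖ ^ 2 := by rw [Real.norm_eq_abs, sq_abs]
  rw [this]
  exact Finset.single_le_sum (f := fun j => ‖v j‖^2) (fun j _ => sq_nonneg _)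
    (Finset.mem_univ i)

lemma overlap {R : ℝ} (hR : 0 < R) (g : E3 → ℝ≥0∞) (hg : Measurable g) :
    ∑' k : Fin 3 → ℤ, ∫⁻ x in ball (R • zc k) R, g x ≤ 8 * ∫⁻ x, g x := by
  have hmb : ∀ k : Fin 3 → ℤ, MeasurableSet (ball (R • zc k) R) := fun k => measurableSet_ball
  calc ∑' k : Fin 3 → ℤ, ∫⁻ x in ball (R • zc k) R, g x
      = ∑' k : Fin 3 → ℤ, ∫⁻ x, (ball (R • zc k) R).indicator g x := by
        apply tsum_congr; intro k; exact (lintegral_indicator (hmb k) g).symm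
    _ = ∫⁻ x, ∑' k : Fin 3 → ℤ, (ball (R • zc k) R).indicator g x :=
        (lintegral_tsum (fun k => (hg.indicator (hmb k)).aemeasurable)).symm
    _ ≤ ∫⁻ x, 8 * g x := by
        apply lintegral_mono; intro x
        -- injection into Fin 3 → Bool
        set m : (Fin 3 → Bool) → (Fin 3 → ℤ) :=
          fun b i => ⌊x i / R⌋ + (if b i then 1 else 0) with hm
        have hinj : Function.Injective m := by
          intro b b' h
          funext i
          have := congrFun h i
          simp only [hm] at this
          rcases Bool.dichotomy (b i) with hb | hb <;> rcases Bool.dichotomy (b' i) with hb' | hb' <;>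
            simp [hb, hb'] at this ⊢
        have hrange : Function.support (fun k => (ball (R • zc k) R).indicator g x)
            ⊆ Set.range m := by
          intro k hk
          have hxk : x ∈ ball (R • zc k) R := by
            by_contra hcon
            exact hk (by simp [Set.indicator_of_notMem hcon])
          have hco : ∀ i, k i = ⌊x i / R⌋ ∨ k i = ⌊x i / R⌋ + 1 := by
            intro i
            have hdist : dist x (R • zc k) < R := mem_ball.1 hxk
            have h1 : |x i - R * (k i : ℝ)| < R := by
              have : |(x - R • zc k) i| ≤ ‖x - R • zc k‖ := coord_le_norm _ i
              have hsub : (x - R • zc k) i = x i - R * (k i : ℝ) := by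
                simp [zc, PiLp.sub_apply, PiLp.smul_apply, smul_eq_mul]
              rw [hsub] at this
              calc |x i - R * (k i:ℝ)| ≤ ‖x - R • zc k‖ := this
                _ = dist x (R • zc k) := (dist_eq_norm _ _).symm
                _ < R := hdist
            have h2 : |x i / R - (k i : ℝ)| < 1 := by
              have heq : x i / R - (k i : ℝ) = (x i - R * (k i:ℝ))/R := by field_simp
              rw [heq, abs_div, abs_of_pos hR, div_lt_one hR]
              exact h1
            rw [abs_lt] at h2
            set y := x i / R
            have hlow : ⌊y⌋ ≤ k i := by
              have : ⌊y⌋ < k i + 1 := Int.floor_lt.2 (by push_cast; linarith [h2.1])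
              omega
            have hhigh : k i ≤ ⌊y⌋ + 1 := by
              have : k i ≤ ⌊y + 1⌋ := Int.le_floor.2 (by push_cast; linarith [h2.2])
              rwa [Int.floor_add_one] at this
            omega
          refine ⟨fun i => decide (k i = ⌊x i / R⌋ + 1), ?_⟩
          funext i
          rcases hco i with h | h <;> simp [hm, h]
        calc ∑' k : Fin 3 → ℤ, (ball (R • zc k) R).indicator g x
            = ∑' b : Fin 3 → Bool, (ball (R • zc (m b)) R).indicator g x :=
              (hinj.tsum_eq hrange).symm
          _ ≤ ∑' _b : Fin 3 → Bool, g x := by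
              apply ENNReal.tsum_le_tsum; intro b
              exact Set.indicator_le_self _ _ x
          _ = 8 * g x := by
              rw [tsum_fintype, Finset.sum_const, Finset.card_univ]
              norm_num [Fintype.card_fun, nsmul_eq_mul]
    _ = 8 * ∫⁻ x, g x := by rw [lintegral_const_mul _ hg]


lemma vol_le (u : E3 → E3) {σ : ℝ≥0} (hσ : 0 < σ) :
    volume {x : E3 | (σ:ℝ) < ‖u x‖} ≤ (wL3 u / σ) ^ (3:ℕ) := by
  set V := volume {x : E3 | (σ:ℝ) < ‖u x‖} with hV
  have h1 : (σ : ℝ≥0∞) * V ^ ((1:ℝ)/3) ≤ wL3 u := le_iSup (fun σ : ℝ≥0 =>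
    (σ : ℝ≥0∞) * (volume {x : E3 | (σ : ℝ) < ‖u x‖}) ^ ((1:ℝ)/3)) σ
  have h2 : V ^ ((1:ℝ)/3) ≤ wL3 u / σ := by
    rw [ENNReal.le_div_iff_mul_le (Or.inl (by exact_mod_cast hσ.ne')) (Or.inl ENNReal.coe_ne_top)]
    rw [mul_comm]; exact h1
  calc V = (V ^ ((1:ℝ)/3)) ^ (3:ℕ) := by
        rw [← ENNReal.rpow_natCast (V ^ ((1:ℝ)/3)) 3, ← ENNReal.rpow_mul]
        norm_num
    _ ≤ (wL3 u / σ) ^ (3:ℕ) := by gcongr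

lemma high_part (u : E3 → E3) (hm : Measurable u) {σ : ℝ≥0} (hσ : 0 < σ) :
    ∫⁻ x, {y : E3 | (σ:ℝ) < ‖u y‖}.indicator (fun y => (‖u y‖₊ : ℝ≥0∞)^2) x
      ≤ 8 * (wL3 u)^(3:ℕ) * (σ : ℝ≥0∞)⁻¹ := by
  have hmeas : ∀ τ : ℝ≥0, MeasurableSet {y : E3 | (τ:ℝ) < ‖u y‖} :=
    fun τ => measurableSet_lt measurable_const hm.norm
  have hpt : ∀ x, {y : E3 | (σ:ℝ) < ‖u y‖}.indicator (fun y => (‖u y‖₊ : ℝ≥0∞)^2) x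
      ≤ ∑' i : ℕ, {y : E3 | ((2^i * σ : ℝ≥0):ℝ) < ‖u y‖}.indicator
          (fun _ => ((2^(i+1) * σ : ℝ≥0) : ℝ≥0∞)^2) x := by
    intro x
    by_cases hx : (σ:ℝ) < ‖u x‖
    · rw [Set.indicator_of_mem (show x ∈ {y : E3 | (σ:ℝ) < ‖u y‖} from hx)]
      set t : ℝ≥0 := ‖u x‖₊ with ht
      have htσ : σ < t := by
        rw [← NNReal.coe_lt_coe, ht, coe_nnnorm]; exact hx
      -- find dyadic level
      have hex : ∃ n : ℕ, t ≤ 2^n * σ := by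
        obtain ⟨n, hn⟩ := pow_unbounded_of_one_lt (t / σ) (one_lt_two (α := ℝ≥0))
        exact ⟨n, by rw [← div_le_iff₀ hσ]; exact hn.le⟩
      set n₀ := Nat.find hex with hn₀
      have hn₀pos : 0 < n₀ := by
        rcases Nat.eq_zero_or_pos n₀ with h | h
        · exfalso
          have := Nat.find_spec hex
          rw [← hn₀, h] at this
          simp at this
          exact absurd this (not_le.2 htσ)
        · exact h
      set i := n₀ - 1 with hi
      have h1 : 2^i * σ < t := by
        have := Nat.find_min hex (m := i) (by omega)
        exact not_le.1 this
      have h2 : t ≤ 2^(i+1) * σ := by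
        have : i + 1 = n₀ := by omega
        rw [this]
        exact Nat.find_spec hex
      have hxin : x ∈ {y : E3 | ((2^i * σ : ℝ≥0):ℝ) < ‖u y‖} := by
        simp only [Set.mem_setOf_eq]
        rw [← coe_nnnorm, ← ht]
        exact_mod_cast h1
      calc ((t:ℝ≥0∞))^2 ≤ (((2^(i+1) * σ : ℝ≥0)) : ℝ≥0∞)^2 := by
            gcongr

        _ = {y : E3 | ((2^i * σ : ℝ≥0):ℝ) < ‖u y‖}.indicator
              (fun _ => ((2^(i+1) * σ : ℝ≥0) : ℝ≥0∞)^2) x := by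
            rw [Set.indicator_of_mem hxin]
        _ ≤ ∑' i : ℕ, {y : E3 | ((2^i * σ : ℝ≥0):ℝ) < ‖u y‖}.indicator
              (fun _ => ((2^(i+1) * σ : ℝ≥0) : ℝ≥0∞)^2) x := ENNReal.le_tsum i
    · rw [Set.indicator_of_notMem (show x ∉ {y : E3 | (σ:ℝ) < ‖u y‖} from hx)]
      exact zero_le
  calc ∫⁻ x, {y : E3 | (σ:ℝ) < ‖u y‖}.indicator (fun y => (‖u y‖₊ : ℝ≥0∞)^2) x
      ≤ ∫⁻ x, ∑' i : ℕ, {y : E3 | ((2^i * σ : ℝ≥0):ℝ) < ‖u y‖}.indicator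
          (fun _ => ((2^(i+1) * σ : ℝ≥0) : ℝ≥0∞)^2) x := lintegral_mono hpt
    _ = ∑' i : ℕ, ∫⁻ x, {y : E3 | ((2^i * σ : ℝ≥0):ℝ) < ‖u y‖}.indicator
          (fun _ => ((2^(i+1) * σ : ℝ≥0) : ℝ≥0∞)^2) x :=
        lintegral_tsum (fun i => ((measurable_const).indicator (hmeas _)).aemeasurable)
    _ = ∑' i : ℕ, ((2^(i+1) * σ : ℝ≥0) : ℝ≥0∞)^2 * volume {y : E3 | ((2^i * σ : ℝ≥0):ℝ) < ‖u y‖} := by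
        apply tsum_congr; intro i
        rw [lintegral_indicator_const (hmeas _)]
    _ ≤ ∑' i : ℕ, ((2^(i+1) * σ : ℝ≥0) : ℝ≥0∞)^2 * (wL3 u / (2^i * σ : ℝ≥0)) ^ (3:ℕ) := by
        apply ENNReal.tsum_le_tsum; intro i
        gcongr
        exact vol_le u (by positivity)
    _ = ∑' i : ℕ, (4 * (wL3 u)^(3:ℕ) * (σ : ℝ≥0∞)⁻¹) * (2:ℝ≥0∞)⁻¹^i := by
        apply tsum_congr; intro i
        have hσ0 : (σ : ℝ≥0∞) ≠ 0 := by exact_mod_cast hσ.ne'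
        have hσt : (σ : ℝ≥0∞) ≠ ⊤ := ENNReal.coe_ne_top
        have hσ0' : σ ≠ 0 := hσ.ne'
        have key : (((2^(i+1) * σ : ℝ≥0)) : ℝ≥0∞)^2 * ((((2^i * σ : ℝ≥0)) : ℝ≥0∞)⁻¹)^2
            * (((2^i * σ : ℝ≥0) : ℝ≥0∞)⁻¹) = ((4 * σ⁻¹ * (2⁻¹)^i : ℝ≥0) : ℝ≥0∞) := by
          rw [← ENNReal.coe_inv (by positivity), ← ENNReal.coe_pow, ← ENNReal.coe_pow,
            ← ENNReal.coe_mul, ← ENNReal.coe_mul, ENNReal.coe_inj]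
          field_simp
          ring_nf
          rw [show i * 3 = i + i * 2 by ring, pow_add, ← mul_assoc, ← mul_pow]
          norm_num
        rw [div_eq_mul_inv, mul_pow]
        have h2half : ((2⁻¹ : ℝ≥0) : ℝ≥0∞) = (2:ℝ≥0∞)⁻¹ := by
          rw [ENNReal.coe_inv (by norm_num)]; norm_num
        calc (((2^(i+1) * σ : ℝ≥0)) : ℝ≥0∞)^2 * ((wL3 u)^(3:ℕ) * ((((2^i * σ : ℝ≥0)) : ℝ≥0∞)⁻¹)^(3:ℕ))
            = (wL3 u)^(3:ℕ) * ((((2^(i+1) * σ : ℝ≥0)) : ℝ≥0∞)^2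
                * ((((2^i * σ : ℝ≥0)) : ℝ≥0∞)⁻¹)^2 * (((2^i * σ : ℝ≥0) : ℝ≥0∞)⁻¹)) := by ring
          _ = (wL3 u)^(3:ℕ) * ((4 * σ⁻¹ * (2⁻¹)^i : ℝ≥0) : ℝ≥0∞) := by rw [key]
          _ = 4 * (wL3 u)^(3:ℕ) * (σ:ℝ≥0∞)⁻¹ * (2:ℝ≥0∞)⁻¹^i := by
              rw [ENNReal.coe_mul, ENNReal.coe_mul, ENNReal.coe_pow, h2half,
                ENNReal.coe_inv hσ0']
              norm_num
              ring
    _ = (4 * (wL3 u)^(3:ℕ) * (σ : ℝ≥0∞)⁻¹) * (1 - 2⁻¹)⁻¹ := by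
        rw [ENNReal.tsum_mul_left, ENNReal.tsum_geometric]
    _ = 8 * (wL3 u)^(3:ℕ) * (σ : ℝ≥0∞)⁻¹ := by
        have : (1 - 2⁻¹ : ℝ≥0∞)⁻¹ = 2 := by
          rw [ENNReal.one_sub_inv_two, inv_inv]
        rw [this]
        ring

lemma two_zpow_eq_coe (j : ℤ) : (2:ℝ≥0∞)^j = (((2:ℝ≥0)^j : ℝ≥0) : ℝ≥0∞) := by
  rw [ENNReal.coe_zpow (by norm_num)]; norm_num

lemma two_zpow_ne_zero (j : ℤ) : (2:ℝ≥0∞)^j ≠ 0 := by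
  rw [two_zpow_eq_coe]
  exact_mod_cast (zpow_pos (by norm_num : (0:ℝ≥0) < 2) j).ne'

lemma two_zpow_ne_top (j : ℤ) : (2:ℝ≥0∞)^j ≠ ⊤ := by
  rw [two_zpow_eq_coe]
  exact ENNReal.coe_ne_top


open Classical in
/-- Lemma B.2: if `u₀ ∈ L^{3,∞}(ℝ³)`, then for every `q > 3` there is
`C = C(q)` such that `A_{0,q}(R) ≤ C R ‖u₀‖²_{L^{3,∞}}` for all `R > 0`. -/
theorem A0q_le_weakL3 (u₀ : E3 → E3) (hmeas : Measurable u₀) (hfin : wL3 u₀ < ⊤) :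
    ∀ q : ℝ, 3 < q → ∃ C : ℝ, 0 < C ∧
      ∀ R : ℝ, 0 < R →
        A0q q R u₀ ≤ ENNReal.ofReal (C * R) * (wL3 u₀) ^ 2 := by
  intro q hq
  have hq0 : (0:ℝ) < q := by linarith
  set M := wL3 u₀ with hMdef
  have hMt : M ≠ ⊤ := hfin.ne
  by_cases hM0 : M = 0
  -- degenerate case : u₀ = 0 a.e.
  · refine ⟨1, one_pos, fun R hR => ?_⟩
    have hv : ∀ σ : ℝ≥0, 0 < σ → volume {x : E3 | (σ:ℝ) < ‖u₀ x‖} = 0 := by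
      intro σ hσ
      have h1 : (σ:ℝ≥0∞) * (volume {x : E3 | (σ:ℝ) < ‖u₀ x‖}) ^ ((1:ℝ)/3) ≤ M :=
        le_iSup (fun σ : ℝ≥0 =>
          (σ : ℝ≥0∞) * (volume {x : E3 | (σ : ℝ) < ‖u₀ x‖}) ^ ((1:ℝ)/3)) σ
      rw [hM0] at h1
      have h2 := le_antisymm h1 zero_le
      rcases mul_eq_zero.1 h2 with h | h
      · exact absurd h (by exact_mod_cast hσ.ne')
      · rcases (ENNReal.rpow_eq_zero_iff).1 h with ⟨h3, _⟩ | ⟨_, h4⟩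
        · exact h3
        · norm_num at h4
    have hv0 : volume {x : E3 | 0 < ‖u₀ x‖} = 0 := by
      have hsub : {x : E3 | 0 < ‖u₀ x‖} ⊆
          ⋃ n : ℕ, {x : E3 | (((((n:ℝ≥0)+1))⁻¹ : ℝ≥0) : ℝ) < ‖u₀ x‖} := by
        intro x hx
        obtain ⟨n, hn⟩ := exists_nat_one_div_lt (show (0:ℝ) < ‖u₀ x‖ from hx)
        refine Set.mem_iUnion.2 ⟨n, ?_⟩
        simp only [Set.mem_setOf_eq]
        push_cast
        rw [inv_eq_one_div]
        exact_mod_cast hn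
      refine measure_mono_null hsub (measure_iUnion_null fun n => hv _ ?_)
      rw [inv_pos]
      positivity
    have hzero : ∀ k : Fin 3 → ℤ,
        (∫⁻ x in ball (R • zc k) R, (‖u₀ x‖₊ : ℝ≥0∞) ^ 2) = 0 := by
      intro k
      have hae : (fun x => (‖u₀ x‖₊ : ℝ≥0∞)^2) =ᵐ[volume] 0 := by
        apply measure_mono_null _ hv0
        intro x hx
        simp only [Set.mem_setOf_eq] at hx ⊢
        by_contra h
        push_neg at h
        have hx0 : u₀ x = 0 := norm_eq_zero.1 (le_antisymm h (norm_nonneg _))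
        apply hx
        simp [hx0]
      refine le_antisymm ?_ zero_le
      calc (∫⁻ x in ball (R • zc k) R, (‖u₀ x‖₊ : ℝ≥0∞) ^ 2)
          ≤ ∫⁻ x, (‖u₀ x‖₊ : ℝ≥0∞) ^ 2 := setLIntegral_le_lintegral _ _
        _ = 0 := by rw [lintegral_congr_ae hae]; simp
    rw [A0q]
    have : ∀ k : Fin 3 → ℤ,
        (∫⁻ x in ball (R • zc k) R, (‖u₀ x‖₊ : ℝ≥0∞) ^ 2) ^ (q/2) = 0 := by
      intro k
      rw [hzero k, ENNReal.zero_rpow_of_pos (by linarith)]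
    rw [tsum_congr this, tsum_zero, ENNReal.zero_rpow_of_pos (by positivity)]
    exact zero_le
  -- main case
  · set p : ℝ := q/2 with hp
    set r : ℝ := p - 3/2 with hrdef
    have hppos : 0 < p := by positivity
    have hrpos : 0 < r := by rw [hrdef, hp]; linarith
    set c : ℝ≥0∞ := volume (ball (0:E3) 1) with hcdef
    have hc0 : c ≠ 0 := (measure_ball_pos _ _ one_pos).ne'
    have hct : c ≠ ⊤ := measure_ball_lt_top.ne
    set κ : ℝ≥0∞ := (1 - (2:ℝ≥0∞) ^ (-r))⁻¹ with hκdef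
    have hκt : κ ≠ ⊤ := by
      rw [hκdef, ENNReal.inv_ne_top]
      have h1 : (2:ℝ≥0∞)^(-r) < 1 := by
        have := ENNReal.rpow_lt_rpow_of_exponent_lt (x := 2) (by norm_num) (by norm_num)
          (by linarith : -r < 0)
        rwa [ENNReal.rpow_zero] at this
      exact (tsub_pos_of_lt h1).ne'
    set K : ℝ≥0∞ := (2:ℝ≥0∞)^p * (128 * (2*c)^((1:ℝ)/2)) * κ * (c+8)^r with hKdef
    have hKt : K ≠ ⊤ := by
      rw [hKdef]
      apply ENNReal.mul_ne_top
      apply ENNReal.mul_ne_top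
      apply ENNReal.mul_ne_top
      · exact ENNReal.rpow_ne_top_of_nonneg hppos.le (by norm_num)
      · exact ENNReal.mul_ne_top (by norm_num)
          (ENNReal.rpow_ne_top_of_nonneg (by norm_num)
            (ENNReal.mul_ne_top (by norm_num) hct))
      · exact hκt
      · exact ENNReal.rpow_ne_top_of_nonneg hrpos.le (ENNReal.add_ne_top.2 ⟨hct, by norm_num⟩)
    set t : ℝ := 2/q with htdef
    have htpos : 0 < t := by positivity
    have hKtt : K ^ t ≠ ⊤ := ENNReal.rpow_ne_top_of_nonneg htpos.le hKt
    refine ⟨(K ^ t).toReal + 1, by positivity, fun R hR => ?_⟩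
    have hKC : K ^ t ≤ ENNReal.ofReal ((K ^ t).toReal + 1) :=
      calc K ^ t = ENNReal.ofReal ((K ^ t).toReal) := (ENNReal.ofReal_toReal hKtt).symm
        _ ≤ ENNReal.ofReal ((K ^ t).toReal + 1) := ENNReal.ofReal_le_ofReal (by linarith)
    -- now the estimate for fixed R
    set R' : ℝ≥0∞ := ENNReal.ofReal R with hR'def
    have hR'0 : R' ≠ 0 := (ENNReal.ofReal_pos.2 hR).ne'
    have hR't : R' ≠ ⊤ := ENNReal.ofReal_ne_top
    set vb : ℝ≥0∞ := R'^3 * c with hvbdef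
    have hvb0 : vb ≠ 0 := by
      rw [hvbdef]; exact mul_ne_zero (pow_ne_zero _ hR'0) hc0
    have hvbt : vb ≠ ⊤ := ENNReal.mul_ne_top
      (ENNReal.pow_ne_top hR't) hct
    have hball : ∀ x₀ : E3, volume (ball x₀ R) = vb := by
      intro x₀
      rw [hvbdef, hcdef, Measure.addHaar_ball volume x₀ hR.le]
      congr 1
      rw [hR'def, ← ENNReal.ofReal_pow hR.le]
      congr 1
      simp [finrank_euclideanSpace]
    set a : (Fin 3 → ℤ) → ℝ≥0∞ :=
      fun k => ∫⁻ x in ball (R • zc k) R, (‖u₀ x‖₊ : ℝ≥0∞) ^ 2 with hadef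
    -- splitting estimate
    have hsplit : ∀ (x₀ : E3) (τ : ℝ≥0),
        (∫⁻ x in ball x₀ R, (‖u₀ x‖₊ : ℝ≥0∞) ^ 2)
          ≤ (τ:ℝ≥0∞)^2 * vb +
            ∫⁻ x in ball x₀ R,
              {y : E3 | (τ:ℝ) < ‖u₀ y‖}.indicator (fun y => (‖u₀ y‖₊ : ℝ≥0∞)^2) x := by
      intro x₀ τ
      have hpt : ∀ x : E3, (‖u₀ x‖₊ : ℝ≥0∞) ^ 2 ≤ (τ:ℝ≥0∞)^2 +
          {y : E3 | (τ:ℝ) < ‖u₀ y‖}.indicator (fun y => (‖u₀ y‖₊ : ℝ≥0∞)^2) x := by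
        intro x
        by_cases hx : (τ:ℝ) < ‖u₀ x‖
        · rw [Set.indicator_of_mem (show x ∈ {y : E3 | (τ:ℝ) < ‖u₀ y‖} from hx)]
          exact le_add_self
        · rw [Set.indicator_of_notMem (show x ∉ {y : E3 | (τ:ℝ) < ‖u₀ y‖} from hx)]
          rw [add_zero]
          push_neg at hx
          have hle : ‖u₀ x‖₊ ≤ τ := by
            rw [← NNReal.coe_le_coe, coe_nnnorm]
            exact hx
          exact pow_le_pow_left' (by exact_mod_cast hle) 2
      calc (∫⁻ x in ball x₀ R, (‖u₀ x‖₊ : ℝ≥0∞) ^ 2)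
          ≤ ∫⁻ x in ball x₀ R, ((τ:ℝ≥0∞)^2 +
              {y : E3 | (τ:ℝ) < ‖u₀ y‖}.indicator (fun y => (‖u₀ y‖₊ : ℝ≥0∞)^2) x) :=
            lintegral_mono hpt
        _ = (τ:ℝ≥0∞)^2 * vb +
            ∫⁻ x in ball x₀ R,
              {y : E3 | (τ:ℝ) < ‖u₀ y‖}.indicator (fun y => (‖u₀ y‖₊ : ℝ≥0∞)^2) x := by
            rw [lintegral_add_left measurable_const, setLIntegral_const, hball x₀]
    -- local bound
    set amax : ℝ≥0∞ := (c + 8) * (M^2 * R') with hamaxdef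
    have hamaxt : amax ≠ ⊤ := by
      rw [hamaxdef]
      exact ENNReal.mul_ne_top (ENNReal.add_ne_top.2 ⟨hct, by norm_num⟩)
        (ENNReal.mul_ne_top (ENNReal.pow_ne_top hMt) hR't)
    have hMR : ((M.toNNReal / R.toNNReal : ℝ≥0) : ℝ≥0∞) = M / R' := by
      rw [ENNReal.coe_div (Real.toNNReal_pos.2 hR).ne', ENNReal.coe_toNNReal hMt]
      rw [hR'def]
      rfl
    have hσ₀pos : 0 < M.toNNReal / R.toNNReal := by
      apply div_pos
      · exact ENNReal.toNNReal_pos hM0 hMt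
      · exact Real.toNNReal_pos.2 hR
    have hloc : ∀ x₀ : E3, (∫⁻ x in ball x₀ R, (‖u₀ x‖₊ : ℝ≥0∞) ^ 2) ≤ amax := by
      intro x₀
      set σ₀ : ℝ≥0 := M.toNNReal / R.toNNReal with hσ₀def
      calc (∫⁻ x in ball x₀ R, (‖u₀ x‖₊ : ℝ≥0∞) ^ 2)
          ≤ (σ₀:ℝ≥0∞)^2 * vb +
            ∫⁻ x in ball x₀ R,
              {y : E3 | (σ₀:ℝ) < ‖u₀ y‖}.indicator (fun y => (‖u₀ y‖₊ : ℝ≥0∞)^2) x :=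
            hsplit x₀ σ₀
        _ ≤ (σ₀:ℝ≥0∞)^2 * vb +
            ∫⁻ x, {y : E3 | (σ₀:ℝ) < ‖u₀ y‖}.indicator (fun y => (‖u₀ y‖₊ : ℝ≥0∞)^2) x := by
            gcongr
            exact Measure.restrict_le_self
        _ ≤ (σ₀:ℝ≥0∞)^2 * vb + 8 * M^(3:ℕ) * (σ₀ : ℝ≥0∞)⁻¹ := by
            gcongr
            exact high_part u₀ hmeas hσ₀pos
        _ = amax := by
            rw [hMR, hvbdef, hamaxdef]
            have e1 : (M / R')^2 * (R'^3 * c) = M^2 * R' * c := by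
              have hcancel : R'⁻¹ ^ 2 * R' ^ 3 = R' := by
                have h : R'⁻¹ ^ 2 * R' ^ 3 = (R'⁻¹ * R')^2 * R' := by ring
                rw [h, ENNReal.inv_mul_cancel hR'0 hR't, one_pow, one_mul]
              calc (M / R')^2 * (R'^3 * c) = M^2 * (R'⁻¹^2 * R'^3) * c := by
                    rw [div_eq_mul_inv, mul_pow]; ring
                _ = M^2 * R' * c := by rw [hcancel]
            have e2 : (M / R')⁻¹ = R' / M := ENNReal.inv_div (Or.inr hMt) (Or.inr hM0)
            have e3 : 8 * M^(3:ℕ) * (R' / M) = 8 * (M^2 * R') := by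
              rw [div_eq_mul_inv, pow_succ]
              calc 8 * (M^2 * M) * (R' * M⁻¹) = 8 * (M^2 * R') * (M * M⁻¹) := by ring
                _ = 8 * (M^2 * R') := by
                    rw [ENNReal.mul_inv_cancel hM0 hMt, mul_one]
            rw [e1, e2, e3]
            ring
    have hafin : ∀ k, a k ≠ ⊤ := fun k => ((hloc _).trans_lt hamaxt.lt_top).ne
    have haamax : ∀ k, a k ≤ amax := fun k => hloc _
    -- counting bound
    set D : ℝ≥0∞ := 128 * (2*vb)^((1:ℝ)/2) * M^(3:ℕ) with hDdef
    have hNj : ∀ j : ℤ,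
        (∑' k : Fin 3 → ℤ, if (2:ℝ≥0∞)^j < a k then (1:ℝ≥0∞) else 0)
          ≤ D * ((2:ℝ≥0∞)^j) ^ (-(3:ℝ)/2) := by
      intro j
      set lj : ℝ≥0∞ := (2:ℝ≥0∞)^j with hljdef
      have hlj0 : lj ≠ 0 := two_zpow_ne_zero j
      have hljt : lj ≠ ⊤ := two_zpow_ne_top j
      set sj : ℝ≥0∞ := (lj / (2 * vb))^((1:ℝ)/2) with hsjdef
      have hden0 : (2:ℝ≥0∞) * vb ≠ 0 := mul_ne_zero (by norm_num) hvb0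
      have hdent : (2:ℝ≥0∞) * vb ≠ ⊤ := ENNReal.mul_ne_top (by norm_num) hvbt
      have hsj0 : sj ≠ 0 := by
        rw [hsjdef]
        exact (ENNReal.rpow_pos (ENNReal.div_pos hlj0 hdent) (ENNReal.div_lt_top hljt hden0).ne).ne'
      have hsjt : sj ≠ ⊤ :=
        ENNReal.rpow_ne_top_of_nonneg (by norm_num) (ENNReal.div_lt_top hljt hden0).ne
      set τj : ℝ≥0 := sj.toNNReal with hτdef
      have hτcoe : (τj : ℝ≥0∞) = sj := ENNReal.coe_toNNReal hsjt
      have hτpos : 0 < τj := by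
        rw [hτdef]; exact ENNReal.toNNReal_pos hsj0 hsjt
      have hsq : (sj)^2 * vb = lj / 2 := by
        have h1 : (sj)^2 = lj / (2 * vb) := by
          rw [hsjdef, ← ENNReal.rpow_natCast _ 2, ← ENNReal.rpow_mul]
          norm_num
        rw [h1, div_eq_mul_inv, ENNReal.mul_inv (Or.inl (by norm_num)) (Or.inl (by norm_num))]
        calc lj * (2⁻¹ * vb⁻¹) * vb = lj * 2⁻¹ * (vb⁻¹ * vb) := by ring
          _ = lj / 2 := by rw [ENNReal.inv_mul_cancel hvb0 hvbt, mul_one, div_eq_mul_inv]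
      set g : E3 → ℝ≥0∞ :=
        fun x => {y : E3 | (τj:ℝ) < ‖u₀ y‖}.indicator (fun y => (‖u₀ y‖₊ : ℝ≥0∞)^2) x with hgdef
      have hgmeas : Measurable g :=
        (measurable_coe_nnreal_ennreal.comp hmeas.nnnorm).pow_const 2 |>.indicator
          (measurableSet_lt measurable_const hmeas.norm)
      set hint : (Fin 3 → ℤ) → ℝ≥0∞ := fun k => ∫⁻ x in ball (R • zc k) R, g x with hhdef
      have hk : ∀ k, (if lj < a k then (1:ℝ≥0∞) else 0) ≤ 2 * lj⁻¹ * hint k := by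
        intro k
        split_ifs with hcase
        · have hup : a k ≤ lj / 2 + hint k := by
            have := hsplit (R • zc k) τj
            rw [hτcoe, hsq] at this
            exact this
          have hlow : lj / 2 ≤ hint k := by
            by_contra hcon
            push_neg at hcon
            have : a k ≤ lj := by
              calc a k ≤ lj/2 + hint k := hup
                _ ≤ lj/2 + lj/2 := by gcongr
                _ = lj := ENNReal.add_halves lj
            exact absurd hcase (not_lt.2 this)
          calc (1:ℝ≥0∞) = 2 * lj⁻¹ * (lj/2) := by
                rw [div_eq_mul_inv]
                calc (1:ℝ≥0∞) = (lj⁻¹ * lj) * (2 * 2⁻¹) := by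
                      rw [ENNReal.inv_mul_cancel hlj0 hljt,
                        ENNReal.mul_inv_cancel (by norm_num) (by norm_num), mul_one]
                  _ = 2 * lj⁻¹ * (lj * 2⁻¹) := by ring
            _ ≤ 2 * lj⁻¹ * hint k := by gcongr
        · exact zero_le
      have hsjinv : sj⁻¹ = (2*vb)^((1:ℝ)/2) * lj ^ (-(1:ℝ)/2) := by
        have h1 : sj = lj^((1:ℝ)/2) / (2*vb)^((1:ℝ)/2) := by
          rw [hsjdef, ENNReal.div_rpow_of_nonneg _ _ (by norm_num)]
        rw [h1, ENNReal.inv_div (Or.inl (ENNReal.rpow_ne_top_of_nonneg (by norm_num) hdent))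
          (Or.inl (by
            exact (ENNReal.rpow_pos (by positivity) hdent).ne'))]
        rw [div_eq_mul_inv, ← ENNReal.rpow_neg]
        norm_num
      calc (∑' k : Fin 3 → ℤ, if lj < a k then (1:ℝ≥0∞) else 0)
          ≤ ∑' k : Fin 3 → ℤ, 2 * lj⁻¹ * hint k := ENNReal.tsum_le_tsum hk
        _ = 2 * lj⁻¹ * ∑' k, hint k := ENNReal.tsum_mul_left
        _ ≤ 2 * lj⁻¹ * (8 * ∫⁻ x, g x) := by
            gcongr
            exact overlap hR g hgmeas
        _ ≤ 2 * lj⁻¹ * (8 * (8 * M^(3:ℕ) * (τj : ℝ≥0∞)⁻¹)) := by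
            gcongr
            exact high_part u₀ hmeas hτpos
        _ = D * (lj⁻¹ * (lj ^ (-(1:ℝ)/2))) := by
            rw [hτcoe, hsjinv, hDdef]
            ring
        _ = D * lj ^ (-(3:ℝ)/2) := by
            congr 1
            rw [← ENNReal.rpow_neg_one lj, ← ENNReal.rpow_add _ _ hlj0 hljt]
            norm_num
    -- main chain
    set S : ℝ≥0∞ := ∑' k : Fin 3 → ℤ, (a k) ^ p with hSdef
    have hS1 : S ≤ (2:ℝ≥0∞)^p * ∑' j : ℤ, (((2:ℝ≥0∞)^j)^p *
        ∑' k : Fin 3 → ℤ, (if (2:ℝ≥0∞)^j < a k then (1:ℝ≥0∞) else 0)) := by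
      calc S ≤ ∑' k : Fin 3 → ℤ, (2:ℝ≥0∞)^p *
            ∑' j : ℤ, (if (2:ℝ≥0∞)^j < a k then ((2:ℝ≥0∞)^j) ^ p else 0) := by
            apply ENNReal.tsum_le_tsum
            intro k
            exact geom_lower hppos (hafin k)
        _ = (2:ℝ≥0∞)^p * ∑' k : Fin 3 → ℤ,
            ∑' j : ℤ, (if (2:ℝ≥0∞)^j < a k then ((2:ℝ≥0∞)^j) ^ p else 0) :=
            ENNReal.tsum_mul_left
        _ = (2:ℝ≥0∞)^p * ∑' j : ℤ, ∑' k : Fin 3 → ℤ,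
            (if (2:ℝ≥0∞)^j < a k then ((2:ℝ≥0∞)^j) ^ p else 0) := by
            rw [ENNReal.tsum_comm]
        _ = (2:ℝ≥0∞)^p * ∑' j : ℤ, (((2:ℝ≥0∞)^j)^p *
            ∑' k : Fin 3 → ℤ, (if (2:ℝ≥0∞)^j < a k then (1:ℝ≥0∞) else 0)) := by
            congr 1
            apply tsum_congr; intro j
            rw [← ENNReal.tsum_mul_left]
            apply tsum_congr; intro k
            rw [mul_ite, mul_one, mul_zero]
    have hterm : ∀ j : ℤ, ((2:ℝ≥0∞)^j)^p *
        (∑' k : Fin 3 → ℤ, (if (2:ℝ≥0∞)^j < a k then (1:ℝ≥0∞) else 0))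
          ≤ D * (if (2:ℝ≥0∞)^j < amax then ((2:ℝ≥0∞)^j) ^ r else 0) := by
      intro j
      by_cases hc : (2:ℝ≥0∞)^j < amax
      · rw [if_pos hc]
        calc ((2:ℝ≥0∞)^j)^p * (∑' k : Fin 3 → ℤ, (if (2:ℝ≥0∞)^j < a k then (1:ℝ≥0∞) else 0))
            ≤ ((2:ℝ≥0∞)^j)^p * (D * ((2:ℝ≥0∞)^j) ^ (-(3:ℝ)/2)) := by
              gcongr
              exact hNj j
          _ = D * (((2:ℝ≥0∞)^j)^p * ((2:ℝ≥0∞)^j) ^ (-(3:ℝ)/2)) := by ring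
          _ = D * ((2:ℝ≥0∞)^j) ^ r := by
              congr 1
              rw [← ENNReal.rpow_add _ _ (two_zpow_ne_zero j) (two_zpow_ne_top j)]
              congr 1
              rw [hrdef]
              ring
      · rw [if_neg hc]
        have : ∀ k : Fin 3 → ℤ, (if (2:ℝ≥0∞)^j < a k then (1:ℝ≥0∞) else 0) = 0 := by
          intro k
          rw [if_neg]
          push_neg at hc ⊢
          exact (haamax k).trans hc
        rw [tsum_congr this, tsum_zero, mul_zero, mul_zero]
    have hS2 : S ≤ (2:ℝ≥0∞)^p * (D * (κ * amax ^ r)) := by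
      calc S ≤ (2:ℝ≥0∞)^p * ∑' j : ℤ, (((2:ℝ≥0∞)^j)^p *
            ∑' k : Fin 3 → ℤ, (if (2:ℝ≥0∞)^j < a k then (1:ℝ≥0∞) else 0)) := hS1
        _ ≤ (2:ℝ≥0∞)^p * ∑' j : ℤ,
            D * (if (2:ℝ≥0∞)^j < amax then ((2:ℝ≥0∞)^j) ^ r else 0) := by
            exact mul_le_mul_right (ENNReal.tsum_le_tsum hterm) _
        _ = (2:ℝ≥0∞)^p * (D * ∑' j : ℤ,
            (if (2:ℝ≥0∞)^j < amax then ((2:ℝ≥0∞)^j) ^ r else 0)) := by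
            rw [ENNReal.tsum_mul_left]
        _ ≤ (2:ℝ≥0∞)^p * (D * (κ * amax ^ r)) := by
            gcongr
            rw [hκdef]
            exact geom_upper hrpos hamaxt
    -- constant algebra : 2^p * (D * (κ * amax^r)) = K * (M^2 * R')^p
    have hMexp : M^(3:ℕ) * (M^2)^r = (M^2)^p := by
      rw [← ENNReal.rpow_natCast M 3, ← ENNReal.rpow_natCast M 2, ← ENNReal.rpow_mul,
        ← ENNReal.rpow_mul, ← ENNReal.rpow_add _ _ hM0 hMt]
      congr 1
      rw [hrdef]
      push_cast
      ring
    have hRexp : (R'^3)^((1:ℝ)/2) * R'^r = R'^p := by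
      rw [← ENNReal.rpow_natCast R' 3, ← ENNReal.rpow_mul,
        ← ENNReal.rpow_add _ _ hR'0 hR't]
      congr 1
      rw [hrdef]
      push_cast
      ring
    have halg : (2:ℝ≥0∞)^p * (D * (κ * amax ^ r)) = K * ((M^2 * R')^p) := by
      rw [hDdef, hamaxdef, hKdef]
      have e1 : ((2:ℝ≥0∞)*vb)^((1:ℝ)/2) = (2*c)^((1:ℝ)/2) * (R'^3)^((1:ℝ)/2) := by
        rw [hvbdef]
        rw [show (2:ℝ≥0∞) * (R'^3 * c) = (2*c) * R'^3 by ring]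
        rw [ENNReal.mul_rpow_of_nonneg _ _ (by norm_num)]
      have e2 : ((c+8) * (M^2 * R'))^r = (c+8)^r * ((M^2)^r * R'^r) := by
        rw [ENNReal.mul_rpow_of_nonneg _ _ hrpos.le, ENNReal.mul_rpow_of_nonneg _ _ hrpos.le]
      have e3 : (M^2 * R')^p = (M^2)^p * R'^p := by
        rw [ENNReal.mul_rpow_of_nonneg _ _ hppos.le]
      rw [e1, e2, e3, ← hMexp, ← hRexp]
      ring
    -- conclusion
    have hA : A0q q R u₀ = S ^ t := by
      rw [A0q, htdef, hSdef, hadef, hp]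
    rw [hA]
    calc S ^ t ≤ (K * ((M^2 * R')^p)) ^ t := by
          gcongr
          rw [← halg]
          exact hS2
      _ = K^t * (M^2 * R') := by
          rw [ENNReal.mul_rpow_of_nonneg _ _ htpos.le, ← ENNReal.rpow_mul]
          congr 1
          rw [show p * t = 1 by rw [hp, htdef]; field_simp]
          exact ENNReal.rpow_one _
      _ ≤ ENNReal.ofReal ((K ^ t).toReal + 1) * (M^2 * R') := by gcongr
      _ = ENNReal.ofReal (((K ^ t).toReal + 1) * R) * M^2 := by
          rw [ENNReal.ofReal_mul (by positivity), hR'def]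
          ring

end
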